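/- Let 3 ≤ n ≤ m and let V be a dissipative quadratic stochastic operator on S^{m-1} with coefficients p_{ij,k} such that p_{11,1} = 1, p_{k+1,k+1,k} = 1 for k = 2,…,n−1, p_{22,n} = 1, and for every k with n+1 ≤ k ≤ m there is no i with p_{ii,k} = 1. Then the set of fixed points of V equals {x ∈ S^{m-1} : x₂ = x₃ = ⋯ = x_n and x_i = 0 for all i > n}; in particular V has infinitely many fixed points. -/

import Mathlib

open Finset Filter Topology

/-- `Majorizes y x` means `x ≺ y`: for every `k`, the sum of the `k` largest components of
`x` is at most the sum of the `k` largest components of `y`.  This is expressed via the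
standard equivalent form: every subset-sum of `x` is dominated by some subset-sum of `y`
over a subset of the same cardinality (the maximum of the latter over subsets of
cardinality `k` being exactly the sum of the `k` largest components of `y`). -/
def Majorizes {m : ℕ} (y x : Fin m → ℝ) : Prop :=
  ∀ A : Finset (Fin m), ∃ B : Finset (Fin m),
    B.card = A.card ∧ ∑ i ∈ A, x i ≤ ∑ i ∈ B, y i

/-- The quadratic operator `(Vx)_k = ∑_{i,j} p_{ij,k} x_i x_j` with heredity
coefficients `p`. -/
def QSO {m : ℕ} (p : Fin m → Fin m → Fin m → ℝ) (x : Fin m → ℝ) : Fin m → ℝ :=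
  fun k => ∑ i, ∑ j, p i j k * x i * x j

/-- Conditions on heredity coefficients: symmetry, nonnegativity, stochasticity. -/
def IsQSOCoeff {m : ℕ} (p : Fin m → Fin m → Fin m → ℝ) : Prop :=
  (∀ i j k, p i j k = p j i k) ∧ (∀ i j k, 0 ≤ p i j k) ∧ (∀ i j, ∑ k, p i j k = 1)

/-- Dissipativity of the q.s.o.: `V x ≻ x` for every `x` in the simplex. -/
def IsDissipative {m : ℕ} (p : Fin m → Fin m → Fin m → ℝ) : Prop :=
  ∀ x ∈ stdSimplex ℝ (Fin m), Majorizes (QSO p x) x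

/-- The `k`-th vertex of the simplex (the `k`-th standard basis vector). -/
def vertex {m : ℕ} (k : Fin m) : Fin m → ℝ := fun j => if j = k then 1 else 0

/-- The ω-limit set of the trajectory of `x` under `V`: the set of all limit points of
the sequence `(Vⁿ x)ₙ`. -/
def omegaLimitSet {m : ℕ} (V : (Fin m → ℝ) → Fin m → ℝ) (x : Fin m → ℝ) :
    Set (Fin m → ℝ) :=
  {y | ∃ φ : ℕ → ℕ, StrictMono φ ∧ Tendsto (fun n => V^[φ n] x) atTop (𝓝 y)}

/-!
Dissipativity at a vertex `e_i` forces `p_{ii,σ(i)} = 1` for a single `σ(i)`, and at points of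
the segment `[e_i, e_j]` it forces `p_{ij,σ(i)} ≥ 1/2`. Hence on every face on which `σ` is
injective, `V` is the linear map `x ↦ ∑ᵢ xᵢ e_{σ(i)}`. If `σ` maps everything into a set `H` on
which it is injective, the mass `U` that a fixed point puts on `H` satisfies `U ≥ (1 + U²) / 2`,
so `U = 1`, and the fixed points are exactly the `σ`-invariant distributions on `H`. Under the
hypotheses of the theorem `H = {0, …, n - 1}` (0-based) and `σ` fixes `0` and cycles
`1 → n - 1 → n - 2 → ⋯ → 1`.
-/

variable {m : ℕ} {p : Fin m → Fin m → Fin m → ℝ}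

namespace IsQSOCoeff

lemma sum_le_one (hp : IsQSOCoeff p) (i j : Fin m) (F : Finset (Fin m)) :
    ∑ k ∈ F, p i j k ≤ 1 :=
  hp.2.2 i j ▸ sum_le_sum_of_subset_of_nonneg (subset_univ F) fun k _ _ => hp.2.1 i j k

lemma le_one (hp : IsQSOCoeff p) (i j k : Fin m) : p i j k ≤ 1 := by
  simpa using hp.sum_le_one i j {k}

lemma add_le_one (hp : IsQSOCoeff p) {i j s t : Fin m} (hst : s ≠ t) :
    p i j s + p i j t ≤ 1 := by
  simpa [sum_pair hst] using hp.sum_le_one i j {s, t}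

lemma apply_eq_vertex_of_eq_one (hp : IsQSOCoeff p) {i j s : Fin m} (hs : p i j s = 1)
    (k : Fin m) : p i j k = vertex s k := by
  unfold vertex
  split_ifs with hks
  · rwa [hks]
  · linarith [hp.add_le_one (i := i) (j := j) hks, hp.2.1 i j k]

lemma eq_of_apply_eq_one (hp : IsQSOCoeff p) {i j s t : Fin m} (hs : p i j s = 1)
    (ht : p i j t = 1) : t = s := by
  by_contra hts
  simpa [vertex, hts, ht] using hp.apply_eq_vertex_of_eq_one hs t

end IsQSOCoeff

lemma qso_vertex (i k : Fin m) : QSO p (vertex i) k = p i i k := by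
  simp [QSO, vertex]

lemma qso_segment (hp : IsQSOCoeff p) (i j : Fin m) (a : ℝ) (k : Fin m) :
    QSO p (a • vertex i + (1 - a) • vertex j) k
      = a ^ 2 * p i i k + (1 - a) ^ 2 * p j j k + 2 * a * (1 - a) * p i j k := by
  simp only [QSO, vertex, Pi.add_apply, Pi.smul_apply, smul_eq_mul, mul_add, add_mul,
    mul_ite, ite_mul, mul_one, mul_zero, zero_mul, sum_add_distrib, sum_ite_eq', mem_univ,
    if_true]
  rw [hp.1 j i k]
  ring

lemma sum_qso_apply (H : Finset (Fin m)) (x : Fin m → ℝ) :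
    ∑ k ∈ H, QSO p x k = ∑ i, ∑ j, x i * x j * ∑ k ∈ H, p i j k := by
  simp only [QSO, mul_sum]
  rw [sum_comm]
  refine sum_congr rfl fun i _ => ?_
  rw [sum_comm]
  exact sum_congr rfl fun j _ => sum_congr rfl fun k _ => by ring

lemma vertex_mem_stdSimplex (i : Fin m) : vertex i ∈ stdSimplex ℝ (Fin m) := by
  convert ite_eq_mem_stdSimplex ℝ i using 2 with k
  simp [vertex, eq_comm]

namespace IsDissipative

lemma exists_le_qso (hd : IsDissipative p) {x : Fin m → ℝ} (hx : x ∈ stdSimplex ℝ (Fin m))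
    (i : Fin m) : ∃ b, x i ≤ QSO p x b := by
  obtain ⟨B, hB, hle⟩ := hd x hx {i}
  obtain ⟨b, rfl⟩ := card_eq_one.mp (hB.trans (card_singleton i))
  exact ⟨b, by simpa using hle⟩

lemma exists_diag_eq_one (hp : IsQSOCoeff p) (hd : IsDissipative p) (i : Fin m) :
    ∃ s, p i i s = 1 := by
  obtain ⟨s, hs⟩ := hd.exists_le_qso (vertex_mem_stdSimplex i) i
  rw [qso_vertex] at hs
  exact ⟨s, le_antisymm (hp.le_one i i s) (by simpa [vertex] using hs)⟩

lemma exists_le_qso_segment (hp : IsQSOCoeff p) (hd : IsDissipative p) {i j : Fin m}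
    (hij : i ≠ j) {a : ℝ} (ha₀ : 0 ≤ a) (ha₁ : a ≤ 1) :
    ∃ b, a ≤ a ^ 2 * p i i b + (1 - a) ^ 2 * p j j b + 2 * a * (1 - a) * p i j b := by
  have hz := convex_stdSimplex ℝ (Fin m) (vertex_mem_stdSimplex i) (vertex_mem_stdSimplex j)
    ha₀ (sub_nonneg.mpr ha₁) (add_sub_cancel a 1)
  obtain ⟨b, hb⟩ := hd.exists_le_qso hz i
  refine ⟨b, ?_⟩
  simpa [qso_segment hp, vertex, hij] using hb

lemma half_le_apply_of_ne (hp : IsQSOCoeff p) (hd : IsDissipative p) {i j s t : Fin m}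
    (hij : i ≠ j) (hst : s ≠ t) (hi : p i i s = 1) (hj : p j j t = 1) : 1 / 2 ≤ p i j s := by
  obtain ⟨b, hb⟩ := hd.exists_le_qso_segment hp hij (a := 3 / 4) (by norm_num) (by norm_num)
  rcases eq_or_ne b s with rfl | hbs
  · rw [hp.apply_eq_vertex_of_eq_one hj b] at hb
    simp only [vertex, if_neg hst] at hb
    linarith [hp.le_one i i b]
  · rw [hp.apply_eq_vertex_of_eq_one hi b] at hb
    simp only [vertex, if_neg hbs] at hb
    linarith [hp.le_one j j b, hp.le_one i j b]

lemma half_le_apply_of_eq (hp : IsQSOCoeff p) (hd : IsDissipative p) {i j s : Fin m}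
    (hij : i ≠ j) (hi : p i i s = 1) (hj : p j j s = 1) : 1 / 2 ≤ p i j s := by
  by_contra! hq
  set q := p i j s
  have hq₁ : 0 < 1 - q := by linarith
  -- this `a` lies in `(1/2, 1)` and satisfies `2 a (1 - q) > 1` exactly when `q < 1/2`
  set a := (3 - 2 * q) / (4 * (1 - q)) with ha
  have ha₂ : 2 * a * (1 - q) = (3 - 2 * q) / 2 := by rw [ha]; field_simp; ring
  have ha₁ : a < 1 := by rw [ha, div_lt_one (by positivity)]; linarith
  have ha₀ : 1 / 2 < a := by rw [ha, lt_div_iff₀ (by positivity)]; linarith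
  obtain ⟨b, hb⟩ := hd.exists_le_qso_segment hp hij (by linarith) ha₁.le
  rcases eq_or_ne b s with rfl | hbs
  · rw [hi, hj] at hb
    nlinarith [mul_pos (sub_pos.mpr ha₁) (sub_pos.mpr hq)]
  · rw [hp.apply_eq_vertex_of_eq_one hi b, hp.apply_eq_vertex_of_eq_one hj b] at hb
    simp only [vertex, if_neg hbs] at hb
    have hw : 0 ≤ 2 * a * (1 - a) := by nlinarith
    nlinarith [mul_le_mul_of_nonneg_left (hp.le_one i j b) hw]

lemma half_le_apply (hp : IsQSOCoeff p) (hd : IsDissipative p) {i j s t : Fin m}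
    (hij : i ≠ j) (hi : p i i s = 1) (hj : p j j t = 1) : 1 / 2 ≤ p i j s := by
  rcases eq_or_ne s t with rfl | hst
  · exact hd.half_le_apply_of_eq hp hij hi hj
  · exact hd.half_le_apply_of_ne hp hij hst hi hj

lemma apply_eq_of_ne (hp : IsQSOCoeff p) (hd : IsDissipative p) {i j s t : Fin m}
    (hij : i ≠ j) (hst : s ≠ t) (hi : p i i s = 1) (hj : p j j t = 1) (k : Fin m) :
    p i j k = (vertex s k + vertex t k) / 2 := by
  have hs := hd.half_le_apply hp hij hi hj
  have ht := hp.1 j i t ▸ hd.half_le_apply hp hij.symm hj hi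
  have hst₁ := hp.add_le_one (i := i) (j := j) hst
  unfold vertex
  split_ifs with hks hkt hkt
  · exact absurd (hks.symm.trans hkt) hst
  · subst hks; linarith
  · subst hkt; linarith
  · have := hp.sum_le_one i j {s, t, k}
    rw [sum_insert (by simp [hst, Ne.symm hks]), sum_pair (Ne.symm hkt)] at this
    linarith [hp.2.1 i j k]

variable {σ : Fin m → Fin m} {x : Fin m → ℝ}

lemma qso_apply_eq_sum (hp : IsQSOCoeff p) (hd : IsDissipative p)
    (hσ : ∀ i, p i i (σ i) = 1) (hx : x ∈ stdSimplex ℝ (Fin m))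
    (hinj : Set.InjOn σ (Function.support x)) (k : Fin m) :
    QSO p x k = ∑ i, x i * vertex (σ i) k := by
  have hpair : ∀ i j, p i j k * x i * x j
      = (x i * vertex (σ i) k) * x j / 2 + x i * (x j * vertex (σ j) k) / 2 := by
    intro i j
    by_cases hxi : x i = 0
    · simp [hxi]
    by_cases hxj : x j = 0
    · simp [hxj]
    rcases eq_or_ne i j with rfl | hij
    · rw [hp.apply_eq_vertex_of_eq_one (hσ i)]; ring
    · rw [hd.apply_eq_of_ne hp hij (hinj.ne hxi hxj hij) (hσ i) (hσ j)]; ring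
  simp only [QSO, hpair, sum_add_distrib, ← sum_div, ← sum_mul_sum, hx.2]
  ring

variable {H : Finset (Fin m)}

lemma qso_apply_apply (hp : IsQSOCoeff p) (hd : IsDissipative p)
    (hσ : ∀ i, p i i (σ i) = 1) (hinj : Set.InjOn σ H) (hx : x ∈ stdSimplex ℝ (Fin m))
    (hxH : ∀ i ∉ H, x i = 0) {i : Fin m} (hi : i ∈ H) : QSO p x (σ i) = x i := by
  have hsupp : Function.support x ⊆ H := fun j hj => by_contra fun h => hj (hxH j h)
  rw [hd.qso_apply_eq_sum hp hσ hx (hinj.mono hsupp), sum_eq_single i]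
  · simp [vertex]
  · intro j _ hji
    by_cases hj : j ∈ H
    · simp [vertex, hinj.ne hi hj hji.symm]
    · simp [hxH j hj]
  · simp

lemma qso_apply_eq_zero (hp : IsQSOCoeff p) (hd : IsDissipative p)
    (hσ : ∀ i, p i i (σ i) = 1) (hσH : ∀ i, σ i ∈ H) (hinj : Set.InjOn σ H)
    (hx : x ∈ stdSimplex ℝ (Fin m)) (hxH : ∀ i ∉ H, x i = 0) {k : Fin m} (hk : k ∉ H) :
    QSO p x k = 0 := by
  have hsupp : Function.support x ⊆ H := fun j hj => by_contra fun h => hj (hxH j h)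
  rw [hd.qso_apply_eq_sum hp hσ hx (hinj.mono hsupp)]
  refine sum_eq_zero fun i _ => ?_
  simp [vertex, show k ≠ σ i from fun h => hk (h ▸ hσH i)]

lemma half_le_sum_apply (hp : IsQSOCoeff p) (hd : IsDissipative p)
    (hσ : ∀ i, p i i (σ i) = 1) (hσH : ∀ i, σ i ∈ H) (i j : Fin m) :
    1 / 2 ≤ ∑ k ∈ H, p i j k := by
  have hle : p i j (σ i) ≤ ∑ k ∈ H, p i j k :=
    single_le_sum (fun k _ => hp.2.1 i j k) (hσH i)
  rcases eq_or_ne i j with rfl | hij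
  · linarith [hσ i]
  · linarith [hd.half_le_apply hp hij (hσ i) (hσ j)]

lemma one_le_sum_apply (hp : IsQSOCoeff p) (hd : IsDissipative p)
    (hσ : ∀ i, p i i (σ i) = 1) (hσH : ∀ i, σ i ∈ H) (hinj : Set.InjOn σ H) {i j : Fin m}
    (hi : i ∈ H) (hj : j ∈ H) : 1 ≤ ∑ k ∈ H, p i j k := by
  rcases eq_or_ne i j with rfl | hij
  · exact (hσ i).symm.le.trans (single_le_sum (fun k _ => hp.2.1 i i k) (hσH i))
  · have hle := add_le_sum (fun k _ => hp.2.1 i j k) (hσH i) (hσH j) (hinj.ne hi hj hij)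
    have hji := hp.1 j i (σ j) ▸ hd.half_le_apply hp hij.symm (hσ j) (hσ i)
    linarith [hd.half_le_apply hp hij (hσ i) (hσ j)]

/-- A fixed point carries mass `U := ∑ k ∈ H, x k` with `U ≥ (1 + U²) / 2`, forcing `U = 1`. -/
lemma eq_zero_of_qso_eq_self (hp : IsQSOCoeff p) (hd : IsDissipative p)
    (hσ : ∀ i, p i i (σ i) = 1) (hσH : ∀ i, σ i ∈ H) (hinj : Set.InjOn σ H)
    (hx : x ∈ stdSimplex ℝ (Fin m)) (hfix : QSO p x = x) : ∀ i ∉ H, x i = 0 := by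
  set y : Fin m → ℝ := fun i => if i ∈ H then x i else 0
  have hpair : ∀ i j, x i * x j / 2 + y i * y j / 2 ≤ x i * x j * ∑ k ∈ H, p i j k := by
    intro i j
    have hxx := mul_nonneg (hx.1 i) (hx.1 j)
    by_cases hij : i ∈ H ∧ j ∈ H
    · simp only [y, if_pos hij.1, if_pos hij.2]
      nlinarith [hd.one_le_sum_apply hp hσ hσH hinj hij.1 hij.2]
    · have : y i * y j = 0 := by
        simp only [y]; split_ifs <;> simp_all
      nlinarith [hd.half_le_sum_apply hp hσ hσH i j]
  set U := ∑ k ∈ H, x k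
  have hU : (1 + U ^ 2) / 2 ≤ U := calc
    (1 + U ^ 2) / 2 = ∑ i, ∑ j, (x i * x j / 2 + y i * y j / 2) := by
      simp only [sum_add_distrib, ← sum_div, ← sum_mul_sum, hx.2, y, sum_ite_mem, univ_inter]
      ring
    _ ≤ ∑ i, ∑ j, x i * x j * ∑ k ∈ H, p i j k :=
      sum_le_sum fun i _ => sum_le_sum fun j _ => hpair i j
    _ = U := by rw [← sum_qso_apply, hfix]
  have hU₁ : U = 1 := by nlinarith
  have hcompl : ∑ k ∈ Hᶜ, x k = 0 := by
    linarith [sum_add_sum_compl H x, hx.2]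
  intro i hi
  exact (sum_eq_zero_iff_of_nonneg fun k _ => hx.1 k).mp hcompl i (mem_compl.mpr hi)

theorem qso_eq_self_iff (hp : IsQSOCoeff p) (hd : IsDissipative p)
    (hσ : ∀ i, p i i (σ i) = 1) (hσH : ∀ i, σ i ∈ H) (hinj : Set.InjOn σ H)
    (hx : x ∈ stdSimplex ℝ (Fin m)) :
    QSO p x = x ↔ (∀ i ∉ H, x i = 0) ∧ ∀ i ∈ H, x (σ i) = x i := by
  constructor
  · intro hfix
    have hxH := hd.eq_zero_of_qso_eq_self hp hσ hσH hinj hx hfix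
    refine ⟨hxH, fun i hi => ?_⟩
    rw [← hd.qso_apply_apply hp hσ hinj hx hxH hi, hfix]
  · rintro ⟨hxH, hσx⟩
    funext k
    by_cases hk : k ∈ H
    · obtain ⟨i, hi, rfl⟩ := surjOn_of_injOn_of_card_le σ (fun i _ => hσH i) hinj le_rfl hk
      rw [hd.qso_apply_apply hp hσ hinj hx hxH hi, hσx i hi]
    · rw [hd.qso_apply_eq_zero hp hσ hσH hinj hx hxH hk, hxH k hk]

end IsDissipative

lemma forall_apply_eq_iff_of_cycle {m n : ℕ} {σ : Fin m → Fin m}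
    (hσ : ∀ i : Fin m, (i : ℕ) < n →
      (σ i : ℕ) = if (i : ℕ) = 0 then 0 else if (i : ℕ) = 1 then n - 1 else i - 1)
    (x : Fin m → ℝ) :
    (∀ i : Fin m, (i : ℕ) < n → x (σ i) = x i) ↔
      ∀ i j : Fin m, 1 ≤ (i : ℕ) → (i : ℕ) < n → 1 ≤ (j : ℕ) → (j : ℕ) < n → x i = x j := by
  constructor
  · intro h
    have hchain : ∀ d : ℕ, ∀ i j : Fin m, 1 ≤ (i : ℕ) → (j : ℕ) < n → (j : ℕ) = i + d →
        x i = x j := by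
      intro d
      induction d with
      | zero => intro i j _ _ hij; exact congrArg x (Fin.ext hij.symm)
      | succ d ih =>
        intro i j hi hjn hij
        have hσj : σ j = ⟨i + d, by omega⟩ :=
          Fin.ext (show (σ j : ℕ) = i + d by rw [hσ j hjn]; split_ifs <;> omega)
        rw [ih i ⟨i + d, by omega⟩ hi (by simp; omega) rfl, ← hσj, h j hjn]
    intro i j hi hin hj hjn
    rcases le_total (i : ℕ) j with hij | hij
    · exact hchain (j - i) i j hi hjn (by omega)
    · exact (hchain (i - j) j i hj hin (by omega)).symm
  · intro h i hin
    have hσi := hσ i hin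
    by_cases hi : (i : ℕ) = 0
    · rw [show σ i = i from Fin.ext (by simp [hσi, hi])]
    · exact h _ _ (by rw [hσi]; split_ifs <;> omega) (by rw [hσi]; split_ifs <;> omega)
        (by omega) hin

lemma infinite_setOf_constOn {m n : ℕ} (hn : 2 ≤ n) (hnm : n ≤ m) :
    {x ∈ stdSimplex ℝ (Fin m) |
      (∀ i j : Fin m, 1 ≤ (i : ℕ) → (i : ℕ) < n → 1 ≤ (j : ℕ) → (j : ℕ) < n → x i = x j) ∧
      ∀ i : Fin m, n ≤ (i : ℕ) → x i = 0}.Infinite := by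
  have hn₁ : (0 : ℝ) < n - 1 := by
    rw [sub_pos, Nat.one_lt_cast]; omega
  set g : ℝ → ℕ → ℝ := fun t j => if j = 0 then 1 - t else if j < n then t / (n - 1) else 0
  have hg : Set.InjOn (fun t (i : Fin m) => g t i) (Set.Icc 0 1) := fun s _ t _ hst => by
    simpa [g] using congrFun hst ⟨0, by omega⟩
  refine ((Set.Icc_infinite zero_lt_one).image hg).mono ?_
  rintro _ ⟨t, ⟨ht₀, ht₁⟩, rfl⟩
  refine ⟨⟨fun i => ?_, ?_⟩, fun i j hi hin hj hjn => ?_, fun i hi => ?_⟩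
  · dsimp only [g]
    split_ifs
    exacts [sub_nonneg.mpr ht₁, by positivity, le_rfl]
  · have hsplit : ∀ j ∈ range m,
        g t j = (if j = 0 then 1 - t else 0) + (if j ∈ Ico 1 n then t / (n - 1) else 0) := by
      intro j _
      simp only [g, mem_Ico]
      split_ifs <;> first | (exfalso; omega) | ring
    rw [Fin.sum_univ_eq_sum_range (g t), sum_congr rfl hsplit, sum_add_distrib,
      sum_ite_eq' _ 0, if_pos (mem_range.mpr (by omega)), sum_ite_mem,
      inter_eq_right.mpr (Ico_subset_Ico_left (Nat.zero_le 1) |>.trans (by simpa using hnm)),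
      sum_const, Nat.card_Ico, nsmul_eq_mul, Nat.cast_sub (by omega)]
    field_simp
    ring
  · simp [g, hin, hjn, show (i : ℕ) ≠ 0 by omega, show (j : ℕ) ≠ 0 by omega]
  · simp [g, show (i : ℕ) ≠ 0 by omega, show ¬(i : ℕ) < n by omega]

/-- Case 2(a): a dissipative q.s.o. with `p_{11,1} = 1`, a backward cycle
on `{2,…,n}` (1-based: `p_{k+1,k+1,k} = 1` for `k = 2,…,n−1` and `p_{22,n} = 1`), and no
`i` with `p_{ii,k} = 1` for `k > n`, has fixed point set
`{x : x₂ = ⋯ = x_n, x_i = 0 for i > n}`, which is infinite.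
(0-based indexing in the formalization.) -/
theorem stmt17 {m n : ℕ} (hn : 3 ≤ n) (hnm : n ≤ m)
    (p : Fin m → Fin m → Fin m → ℝ)
    (hp : IsQSOCoeff p) (hd : IsDissipative p)
    (hc0 : p ⟨0, by omega⟩ ⟨0, by omega⟩ ⟨0, by omega⟩ = 1)
    (hc : ∀ j : ℕ, ∀ hj1 : 1 ≤ j, ∀ hj2 : j + 1 < n,
      p ⟨j + 1, by omega⟩ ⟨j + 1, by omega⟩ ⟨j, by omega⟩ = 1)
    (hc2 : p ⟨1, by omega⟩ ⟨1, by omega⟩ ⟨n - 1, by omega⟩ = 1)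
    (hc3 : ∀ k : ℕ, n ≤ k → ∀ hk : k < m, ∀ i : Fin m, p i i ⟨k, hk⟩ ≠ 1) :
    {x ∈ stdSimplex ℝ (Fin m) | QSO p x = x} =
      {x ∈ stdSimplex ℝ (Fin m) |
        (∀ i j : Fin m, 1 ≤ (i : ℕ) → (i : ℕ) < n → 1 ≤ (j : ℕ) → (j : ℕ) < n →
          x i = x j) ∧
        ∀ i : Fin m, n ≤ (i : ℕ) → x i = 0} ∧
    {x ∈ stdSimplex ℝ (Fin m) | QSO p x = x}.Infinite := by
  choose σ hσ using hd.exists_diag_eq_one hp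
  have hσn : ∀ i, (σ i : ℕ) < n := fun i => by
    by_contra! h
    exact hc3 _ h (σ i).2 i (hσ i)
  have hσcycle : ∀ i : Fin m, (i : ℕ) < n →
      (σ i : ℕ) = if (i : ℕ) = 0 then 0 else if (i : ℕ) = 1 then n - 1 else i - 1 := by
    rintro ⟨i, him⟩ hin
    rcases i with _ | _ | i
    · simp [hp.eq_of_apply_eq_one hc0 (hσ _)]
    · simp [hp.eq_of_apply_eq_one hc2 (hσ _)]
    · simp [hp.eq_of_apply_eq_one (hc (i + 1) (by omega) (by omega)) (hσ _)]
  set H : Finset (Fin m) := {i | (i : ℕ) < n}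
  have hinj : Set.InjOn σ H := fun i hi j hj hij => by
    simp only [H, mem_coe, mem_filter, mem_univ, true_and] at hi hj
    have hval := congrArg Fin.val hij
    rw [hσcycle i hi, hσcycle j hj] at hval
    ext
    split_ifs at hval <;> omega
  have hfix : {x ∈ stdSimplex ℝ (Fin m) | QSO p x = x} =
      {x ∈ stdSimplex ℝ (Fin m) |
        (∀ i j : Fin m, 1 ≤ (i : ℕ) → (i : ℕ) < n → 1 ≤ (j : ℕ) → (j : ℕ) < n →
          x i = x j) ∧
        ∀ i : Fin m, n ≤ (i : ℕ) → x i = 0} := by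
    ext x
    refine and_congr_right fun hx => ?_
    rw [hd.qso_eq_self_iff hp hσ (by simpa [H] using hσn) hinj hx,
      ← forall_apply_eq_iff_of_cycle hσcycle, and_comm]
    simp [H, not_lt]
  exact ⟨hfix, hfix ▸ infinite_setOf_constOn (by omega) hnm⟩
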